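/- arXiv:math-ph/0512068 — 2 statements merged into one kernel-verified Lean document; each statement's English description precedes it below -/
import Mathlib

section
/- Every restricted Lorentz transformation T admits a unique polar decomposition T = ρβ where β = (T*T)^{1/2} is a boost and ρ = Tβ^{-1} is a rotation, with adjoints and square roots taken with respect to the Euclidean inner product ⟨x,y⟩_{e₀} = -g(x,y) + 2g(x,e₀)g(y,e₀) determined by a fixed future-directed timelike unit vector e₀; moreover ρ and β again lie in the restricted Lorentz group. -/
/-!
In the standard basis `⟨·,·⟩_{e₀}` is the dot product and `g` is the form of
`η = diag(1, -1, -1, -1)`, so `T` is given by a matrix `M` with `Mᵀ η M = η`.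
Then `A = MᵀM` satisfies `A η A = η`, i.e. `A⁻¹ = η A η`; as conjugation by the symmetric
involution `η` commutes with the positive square root, `η √A η = √(A⁻¹) = (√A)⁻¹`, so
`β = √A` is again Lorentz. The factor `ρ = M β⁻¹` is then both orthogonal and Lorentz,
hence commutes with `η` and is block diagonal, so `ρ e₀ = ρ₀₀ e₀` with `ρ₀₀ = ±1`;
the `(0,0)` entry of `M = ρ β` gives `M₀₀ = ρ₀₀ β₀₀` with `M₀₀, β₀₀ > 0`, so `ρ₀₀ = 1`.
Uniqueness is the uniqueness of the positive square root.
-/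

noncomputable section

/-- Minkowski spacetime ℝ^{1+3}. -/
abbrev V4 : Type := Fin 4 → ℝ

/-- The Minkowski metric of signature (+,-,-,-). -/
def mg (x y : V4) : ℝ := x 0 * y 0 - x 1 * y 1 - x 2 * y 2 - x 3 * y 3

/-- The distinguished future-directed timelike unit vector. -/
def e0 : V4 := fun i => if i = 0 then 1 else 0

/-- A restricted Lorentz transformation: preserves the metric, has determinant 1,
and preserves the time orientation. -/
def IsRestrictedLorentz (T : V4 →ₗ[ℝ] V4) : Prop :=
  (∀ x y, mg (T x) (T y) = mg x y) ∧ LinearMap.det T = 1 ∧ 0 < (T e0) 0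

/-- The Euclidean inner product `⟨x,y⟩_e = -g(x,y) + 2 g(x,e) g(y,e)`
determined by a timelike unit vector `e`. -/
def inn (e x y : V4) : ℝ := -mg x y + 2 * mg x e * mg y e

/-- A rotation with respect to `e`: a restricted Lorentz transformation fixing `e`. -/
def IsRotationAt (e : V4) (T : V4 →ₗ[ℝ] V4) : Prop :=
  IsRestrictedLorentz T ∧ T e = e

/-- A boost with respect to `e`: a restricted Lorentz transformation that is
self-adjoint and positive with respect to `⟨·,·⟩_e`. -/
def IsBoostAt (e : V4) (T : V4 →ₗ[ℝ] V4) : Prop :=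
  IsRestrictedLorentz T ∧ (∀ x y, inn e (T x) y = inn e x (T y)) ∧
    (∀ x, x ≠ 0 → 0 < inn e (T x) x)

open Matrix
open scoped MatrixOrder

namespace Matrix

variable {n K : Type*} [Fintype n] [CommRing K]

lemma mulVec_dotProduct (A : Matrix n n K) (x y : n → K) :
    (A *ᵥ x) ⬝ᵥ y = x ⬝ᵥ (Aᵀ *ᵥ y) := by
  rw [dotProduct_comm, dotProduct_mulVec, dotProduct_comm, mulVec_transpose]

lemma transpose_mul_mul_mul_eq {J A B : Matrix n n K} (hA : Aᵀ * J * A = J)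
    (hB : Bᵀ * J * B = J) : (A * B)ᵀ * J * (A * B) = J :=
  calc (A * B)ᵀ * J * (A * B) = Bᵀ * (Aᵀ * J * A) * B := by
        simp only [transpose_mul, Matrix.mul_assoc]
    _ = J := by rw [hA, hB]

variable [DecidableEq n]

lemma ext_iff_dotProduct_mulVec {A B : Matrix n n K} :
    A = B ↔ ∀ x y, x ⬝ᵥ (A *ᵥ y) = x ⬝ᵥ (B *ᵥ y) := by
  refine ⟨fun hAB x y => by rw [hAB], fun h => ?_⟩
  exact (toLinearMap₂' K).injective <| LinearMap.ext₂ fun x y => by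
    rw [toLinearMap₂'_apply', toLinearMap₂'_apply', h]

lemma transpose_mul_self_mul_inv_eq_one {M B : Matrix n n K} (hBt : Bᵀ = B)
    (hdet : IsUnit B.det) (hMB : Mᵀ * M = B * B) : (M * B⁻¹)ᵀ * (M * B⁻¹) = 1 :=
  calc (M * B⁻¹)ᵀ * (M * B⁻¹) = B⁻¹ * (B * B) * B⁻¹ := by
        rw [transpose_mul, transpose_nonsing_inv, hBt, ← hMB]; simp only [Matrix.mul_assoc]
    _ = 1 := by
      rw [← Matrix.mul_assoc, nonsing_inv_mul _ hdet, Matrix.one_mul, mul_nonsing_inv _ hdet]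

section Involution

variable {J : Matrix n n K}

lemma commute_of_transpose_mul_self_eq_one {R : Matrix n n K} (hR : Rᵀ * R = 1)
    (hRJ : Rᵀ * J * R = J) : J * R = R * J :=
  calc J * R = (R * Rᵀ) * (J * R) := by rw [mul_eq_one_comm.mp hR, Matrix.one_mul]
    _ = R * (Rᵀ * J * R) := by simp only [Matrix.mul_assoc]
    _ = R * J := by rw [hRJ]

lemma inv_transpose_mul_mul_eq {B : Matrix n n K} (hB : Bᵀ * J * B = J) (hdet : IsUnit B.det) :
    B⁻¹ᵀ * J * B⁻¹ = J :=
  calc B⁻¹ᵀ * J * B⁻¹ = B⁻¹ᵀ * (Bᵀ * J * B) * B⁻¹ := by rw [hB]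
    _ = (Bᵀ⁻¹ * Bᵀ) * J * (B * B⁻¹) := by
        rw [transpose_nonsing_inv]; simp only [Matrix.mul_assoc]
    _ = J := by
      rw [nonsing_inv_mul _ (isUnit_det_transpose B hdet), mul_nonsing_inv _ hdet,
        Matrix.one_mul, Matrix.mul_one]

lemma mul_mul_transpose_eq_of_transpose_mul_mul_eq (hJ : J * J = 1) {M : Matrix n n K}
    (hM : Mᵀ * J * M = J) : M * J * Mᵀ = J := by
  have hinv : (J * Mᵀ * J) * M = 1 :=
    calc (J * Mᵀ * J) * M = J * (Mᵀ * J * M) := by simp only [Matrix.mul_assoc]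
      _ = 1 := by rw [hM, hJ]
  have := congrArg (· * J) (mul_eq_one_comm.mp hinv)
  simpa only [Matrix.mul_assoc, hJ, Matrix.mul_one, Matrix.one_mul] using this

lemma transpose_mul_self_mul_mul_eq (hJ : J * J = 1) {M : Matrix n n K}
    (hM : Mᵀ * J * M = J) : Mᵀ * M * J * (Mᵀ * M) = J :=
  calc Mᵀ * M * J * (Mᵀ * M) = Mᵀ * (M * J * Mᵀ) * M := by simp only [Matrix.mul_assoc]
    _ = J := by rw [mul_mul_transpose_eq_of_transpose_mul_mul_eq hJ hM, hM]

end Involution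

section SquareRoot

lemma sqrt_inv {A : Matrix n n ℝ} (hA : A.PosSemidef) : CFC.sqrt A⁻¹ = (CFC.sqrt A)⁻¹ := by
  have hB : (CFC.sqrt A).PosSemidef := (CFC.sqrt_nonneg A).posSemidef
  calc CFC.sqrt A⁻¹ = CFC.sqrt ((CFC.sqrt A)⁻¹ * (CFC.sqrt A)⁻¹) := by
        rw [← Matrix.mul_inv_rev, CFC.sqrt_mul_sqrt_self A hA.nonneg]
    _ = (CFC.sqrt A)⁻¹ := CFC.sqrt_mul_self _ hB.inv.nonneg

variable {J : Matrix n n ℝ}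

lemma sqrt_conj_of_involutive (hJt : Jᵀ = J) (hJ : J * J = 1) {A : Matrix n n ℝ}
    (hA : A.PosSemidef) : CFC.sqrt (J * A * J) = J * CFC.sqrt A * J := by
  have hB : (J * CFC.sqrt A * J).PosSemidef := by
    simpa [hJt] using (CFC.sqrt_nonneg A).posSemidef.mul_mul_conjTranspose_same J
  conv_lhs => rw [← CFC.sqrt_mul_sqrt_self A hA.nonneg]
  rw [← CFC.sqrt_mul_self _ hB.nonneg]
  congr 1
  simp only [Matrix.mul_assoc, ← Matrix.mul_assoc J J, hJ, Matrix.one_mul]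

lemma sqrt_mul_mul_sqrt_eq (hJt : Jᵀ = J) (hJ : J * J = 1) {A : Matrix n n ℝ}
    (hA : A.PosSemidef) (hAJ : A * J * A = J) : CFC.sqrt A * J * CFC.sqrt A = J := by
  set B := CFC.sqrt A
  have hBB : B * B = A := CFC.sqrt_mul_sqrt_self A hA.nonneg
  have hleft : J * A * J * A = 1 :=
    calc J * A * J * A = J * (A * J * A) := by simp only [Matrix.mul_assoc]
      _ = 1 := by rw [hAJ, hJ]
  have hAinv : A⁻¹ = J * A * J := inv_eq_left_inv hleft
  have hBunit : IsUnit B.det := by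
    refine isUnit_of_mul_isUnit_left (y := B.det) ?_
    rw [← det_mul, hBB]
    exact isUnit_det_of_left_inverse hleft
  have hJBJ : J * B * J = B⁻¹ := by
    rw [← sqrt_conj_of_involutive hJt hJ hA, ← hAinv, sqrt_inv hA]
  calc B * J * B = B * (J * B * J) * J := by simp only [Matrix.mul_assoc, hJ, Matrix.mul_one]
    _ = J := by rw [hJBJ, mul_nonsing_inv _ hBunit, Matrix.one_mul]

end SquareRoot

end Matrix

lemma LinearMap.eq_comp_iff_toMatrix' {n R : Type*} [Fintype n] [DecidableEq n] [CommSemiring R]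
    (f g h : (n → R) →ₗ[R] n → R) :
    f = g ∘ₗ h ↔ LinearMap.toMatrix' f = LinearMap.toMatrix' g * LinearMap.toMatrix' h := by
  rw [← LinearMap.toMatrix'_comp, LinearMap.toMatrix'.injective.eq_iff]

def eta : Matrix (Fin 4) (Fin 4) ℝ := diagonal ![1, -1, -1, -1]

lemma eta_transpose : etaᵀ = eta := diagonal_transpose _

lemma eta_mul_eta : eta * eta = 1 := by
  rw [eta, diagonal_mul_diagonal, ← diagonal_one]
  congr 1
  ext i; fin_cases i <;> norm_num

lemma mg_eq_dotProduct (x y : V4) : mg x y = x ⬝ᵥ (eta *ᵥ y) := by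
  simp [mg, eta, dotProduct, mulVec_diagonal, Fin.sum_univ_four]
  ring

lemma inn_e0_eq_dotProduct (x y : V4) : inn e0 x y = x ⬝ᵥ y := by
  simp [inn, mg, e0, dotProduct, Fin.sum_univ_four]
  ring

lemma mulVec_e0 (M : Matrix (Fin 4) (Fin 4) ℝ) : M *ᵥ e0 = fun i => M i 0 := by
  ext i; simp [mulVec, dotProduct, e0]

def IsRestrictedLorentzMatrix (M : Matrix (Fin 4) (Fin 4) ℝ) : Prop :=
  Mᵀ * eta * M = eta ∧ M.det = 1 ∧ 0 < M 0 0

section LinearMap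

variable (f g : V4 →ₗ[ℝ] V4)

lemma isRestrictedLorentz_iff :
    IsRestrictedLorentz f ↔ IsRestrictedLorentzMatrix (LinearMap.toMatrix' f) := by
  set M := LinearMap.toMatrix' f
  have hmg : ∀ x y, mg (f x) (f y) = x ⬝ᵥ ((Mᵀ * eta * M) *ᵥ y) := fun x y => by
    rw [← LinearMap.toMatrix'_mulVec, ← LinearMap.toMatrix'_mulVec, mg_eq_dotProduct,
      mulVec_dotProduct, mulVec_mulVec, mulVec_mulVec, Matrix.mul_assoc]
  have hmetric : (∀ x y, mg (f x) (f y) = mg x y) ↔ Mᵀ * eta * M = eta := by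
    simp only [hmg, mg_eq_dotProduct, ← ext_iff_dotProduct_mulVec]
  rw [IsRestrictedLorentz, IsRestrictedLorentzMatrix, hmetric, LinearMap.det_toMatrix',
    ← LinearMap.toMatrix'_mulVec, mulVec_e0]

lemma isRotationAt_e0_iff :
    IsRotationAt e0 f ↔
      IsRestrictedLorentzMatrix (LinearMap.toMatrix' f) ∧ LinearMap.toMatrix' f *ᵥ e0 = e0 := by
  rw [IsRotationAt, isRestrictedLorentz_iff, LinearMap.toMatrix'_mulVec]

lemma isBoostAt_e0_iff :
    IsBoostAt e0 f ↔
      IsRestrictedLorentzMatrix (LinearMap.toMatrix' f) ∧ (LinearMap.toMatrix' f).PosDef := by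
  have hsymm :
      (∀ x y, inn e0 (f x) y = inn e0 x (f y)) ↔ (LinearMap.toMatrix' f).IsHermitian := by
    simp only [inn_e0_eq_dotProduct, ← LinearMap.toMatrix'_mulVec, mulVec_dotProduct,
      IsHermitian, conjTranspose_eq_transpose_of_trivial, ← ext_iff_dotProduct_mulVec]
  rw [IsBoostAt, hsymm, isRestrictedLorentz_iff, posDef_iff_dotProduct_mulVec]
  simp only [inn_e0_eq_dotProduct, ← LinearMap.toMatrix'_mulVec, star_trivial]
  simp only [dotProduct_comm (LinearMap.toMatrix' f *ᵥ _)]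

lemma forall_inn_e0_map_map_iff :
    (∀ x y, inn e0 (f x) (f y) = inn e0 x (g (g y))) ↔
      (LinearMap.toMatrix' f)ᵀ * LinearMap.toMatrix' f =
        LinearMap.toMatrix' g * LinearMap.toMatrix' g := by
  simp only [inn_e0_eq_dotProduct, ← LinearMap.toMatrix'_mulVec, mulVec_dotProduct,
    mulVec_mulVec, ← ext_iff_dotProduct_mulVec]

end LinearMap

section Polar

variable {M R B : Matrix (Fin 4) (Fin 4) ℝ}

lemma apply_zero_eq_zero_of_eta_mul_eq (h : eta * R = R * eta) {i : Fin 4} (hi : i ≠ 0) :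
    R i 0 = 0 ∧ R 0 i = 0 := by
  have hcol := congrFun (congrFun h i) 0
  have hrow := congrFun (congrFun h 0) i
  simp only [eta, diagonal_mul, mul_diagonal] at hcol hrow
  fin_cases i
  · exact absurd rfl hi
  all_goals simp at hcol hrow ⊢; constructor <;> linarith

lemma mul_apply_zero_zero_of_eta_mul_eq (h : eta * R = R * eta) :
    (R * B) 0 0 = R 0 0 * B 0 0 := by
  have hrow : ∀ i ≠ 0, R 0 i = 0 := fun i hi => (apply_zero_eq_zero_of_eta_mul_eq h hi).2
  rw [mul_apply, Fin.sum_univ_four, hrow 1 (by decide), hrow 2 (by decide), hrow 3 (by decide)]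
  ring

lemma mulVec_e0_eq_of_eta_mul_eq (hR : Rᵀ * R = 1) (h : eta * R = R * eta) (hpos : 0 < R 0 0) :
    R *ᵥ e0 = e0 := by
  have hcol : ∀ i ≠ 0, R i 0 = 0 := fun i hi => (apply_zero_eq_zero_of_eta_mul_eq h hi).1
  have hsq : R 0 0 * R 0 0 = 1 := by
    simpa [mul_apply, Fin.sum_univ_four, hcol] using congrFun (congrFun hR 0) 0
  have h00 : R 0 0 = 1 := by nlinarith
  ext i
  fin_cases i <;> simp [mulVec_e0, e0, h00, hcol]

namespace IsRestrictedLorentzMatrix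

lemma isUnit_det (hM : IsRestrictedLorentzMatrix M) : IsUnit M.det := by
  rw [hM.2.1]; exact isUnit_one

lemma sqrt_transpose_mul_self (hM : IsRestrictedLorentzMatrix M) :
    IsRestrictedLorentzMatrix (CFC.sqrt (Mᵀ * M)) ∧ (CFC.sqrt (Mᵀ * M)).PosDef := by
  have hA : (Mᵀ * M).PosSemidef := by simpa using posSemidef_conjTranspose_mul_self M
  have hB : (CFC.sqrt (Mᵀ * M)).PosSemidef := (CFC.sqrt_nonneg _).posSemidef
  have hdet : (CFC.sqrt (Mᵀ * M)).det = 1 := by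
    rw [hA.det_sqrt, det_mul, det_transpose, hM.2.1]; simp
  have hpos : (CFC.sqrt (Mᵀ * M)).PosDef := hB.posDef_iff_det_ne_zero.mpr (by simp [hdet])
  refine ⟨⟨?_, hdet, hpos.diag_pos⟩, hpos⟩
  rw [← conjTranspose_eq_transpose_of_trivial, hB.isHermitian.eq]
  exact sqrt_mul_mul_sqrt_eq eta_transpose eta_mul_eta hA
    (transpose_mul_self_mul_mul_eq eta_mul_eta hM.1)

lemma mul_inv_of_transpose_mul_self_eq (hM : IsRestrictedLorentzMatrix M)
    (hB : IsRestrictedLorentzMatrix B) (hBpos : B.PosDef) (hMB : Mᵀ * M = B * B) :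
    IsRestrictedLorentzMatrix (M * B⁻¹) ∧ (M * B⁻¹) *ᵥ e0 = e0 := by
  have hBt : Bᵀ = B := by rw [← conjTranspose_eq_transpose_of_trivial, hBpos.isHermitian.eq]
  have horth : (M * B⁻¹)ᵀ * (M * B⁻¹) = 1 :=
    transpose_mul_self_mul_inv_eq_one hBt hB.isUnit_det hMB
  have hlor : (M * B⁻¹)ᵀ * eta * (M * B⁻¹) = eta :=
    transpose_mul_mul_mul_eq hM.1 (inv_transpose_mul_mul_eq hB.1 hB.isUnit_det)
  have hcomm := commute_of_transpose_mul_self_eq_one horth hlor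
  have hpos : 0 < (M * B⁻¹) 0 0 := by
    have hM00 := hM.2.2
    rw [← nonsing_inv_mul_cancel_right _ M hB.isUnit_det,
      mul_apply_zero_zero_of_eta_mul_eq hcomm] at hM00
    exact pos_of_mul_pos_left hM00 hB.2.2.le
  refine ⟨⟨hlor, ?_, hpos⟩, mulVec_e0_eq_of_eta_mul_eq horth hcomm hpos⟩
  rw [det_mul, hM.2.1, det_nonsing_inv, hB.2.1, Ring.inverse_one, one_mul]

theorem existsUnique_polar (hM : IsRestrictedLorentzMatrix M) :
    ∃! p : Matrix (Fin 4) (Fin 4) ℝ × Matrix (Fin 4) (Fin 4) ℝ,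
      (IsRestrictedLorentzMatrix p.1 ∧ p.1 *ᵥ e0 = e0) ∧
        (IsRestrictedLorentzMatrix p.2 ∧ p.2.PosDef) ∧ M = p.1 * p.2 ∧
          Mᵀ * M = p.2 * p.2 := by
  obtain ⟨hB, hBpos⟩ := hM.sqrt_transpose_mul_self
  set B := CFC.sqrt (Mᵀ * M) with hBdef
  have hMB : Mᵀ * M = B * B :=
    (CFC.sqrt_mul_sqrt_self _ (posSemidef_conjTranspose_mul_self M).nonneg).symm
  refine ⟨(M * B⁻¹, B), ⟨hM.mul_inv_of_transpose_mul_self_eq hB hBpos hMB, ⟨hB, hBpos⟩,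
    (nonsing_inv_mul_cancel_right _ M hB.isUnit_det).symm, hMB⟩, ?_⟩
  rintro ⟨R', B'⟩ ⟨-, ⟨-, hB'pos⟩, hMR', hMB'⟩
  have hB' : B' = B := by rw [hBdef, hMB', CFC.sqrt_mul_self _ hB'pos.posSemidef.nonneg]
  dsimp only at hMR'
  rw [Prod.mk.injEq, hB', hMR', hB', mul_nonsing_inv_cancel_right _ _ hB.isUnit_det]
  exact ⟨rfl, rfl⟩

end IsRestrictedLorentzMatrix

end Polar

/-- Every restricted Lorentz transformation `T` admits a unique polar decomposition
`T = ρ ∘ β` into a rotation `ρ` and a boost `β` with respect to `e₀`, where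
`β = (T*T)^{1/2}`, i.e. `β² = T*T` (expressed via the inner product `⟨·,·⟩_{e₀}`:
`⟨Tx, Ty⟩ = ⟨x, β(β y)⟩` for all `x, y`); both factors lie again in the
restricted Lorentz group. -/
theorem polar_decomposition (T : V4 →ₗ[ℝ] V4) (hT : IsRestrictedLorentz T) :
    ∃! p : (V4 →ₗ[ℝ] V4) × (V4 →ₗ[ℝ] V4),
      IsRotationAt e0 p.1 ∧ IsBoostAt e0 p.2 ∧ T = p.1 ∘ₗ p.2 ∧
        ∀ x y, inn e0 (T x) (T y) = inn e0 x (p.2 (p.2 y)) := by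
  refine (Equiv.existsUnique_congr
    (LinearMap.toMatrix'.toEquiv.prodCongr LinearMap.toMatrix'.toEquiv) fun p => ?_).mpr
      ((isRestrictedLorentz_iff T).mp hT).existsUnique_polar
  rw [isRotationAt_e0_iff, isBoostAt_e0_iff, LinearMap.eq_comp_iff_toMatrix',
    forall_inn_e0_map_map_iff]
  rfl
end
end

section
/- If two Rindler wedges W_a and W_b satisfy W_a ∉ {W_b, -W_b}, then the only restricted Lorentz transformation mapping both W_a onto W_a and W_b onto W_b is the identity. -/
noncomputable section

/-- A future-oriented orthonormal zweibein. -/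
def IsZweibein (t x : V4) : Prop :=
  mg t t = 1 ∧ mg x x = -1 ∧ mg t x = 0 ∧ 0 < t 0

/-- The Rindler wedge associated with a zweibein `(t,x)`. -/
def Wedge (t x : V4) : Set V4 := {y : V4 | |mg y t| < mg y x}

/-!
A wedge `W(t, x)` is the intersection of the half-spaces `0 < g(y, x + t)` and
`0 < g(y, x - t)`, bounded by the null vectors `x + t` (future) and `x - t` (past). Dualising the
closed wedge shows that an inclusion of wedges forces their null rays to agree, so a Lorentz
transformation stabilising `W` scales `x ± t` by positive factors. Two orthogonal null vectors
are parallel, so unless `W_b = ±W_a`, one null ray of `W_b` is transverse to both null rays of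
`W_a`. Isometry forces the eigenvalues of pairwise non-orthogonal null eigenvectors to multiply
to `1`, hence all three are `1`: `μ` fixes three independent null vectors, and on their
orthogonal line it acts by `det μ = 1`.
-/

lemma mg_comm (x y : V4) : mg x y = mg y x := by unfold mg; ring

lemma mg_add_left (x y z : V4) : mg (x + y) z = mg x z + mg y z := by
  simp only [mg, Pi.add_apply]; ring

lemma mg_add_right (x y z : V4) : mg x (y + z) = mg x y + mg x z := by
  simp only [mg, Pi.add_apply]; ring

lemma mg_sub_left (x y z : V4) : mg (x - y) z = mg x z - mg y z := by
  simp only [mg, Pi.sub_apply]; ring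

lemma mg_sub_right (x y z : V4) : mg x (y - z) = mg x y - mg x z := by
  simp only [mg, Pi.sub_apply]; ring

lemma mg_neg_left (x y : V4) : mg (-x) y = -mg x y := by simp only [mg, Pi.neg_apply]; ring

lemma mg_neg_right (x y : V4) : mg x (-y) = -mg x y := by simp only [mg, Pi.neg_apply]; ring

lemma mg_smul_left (a : ℝ) (x y : V4) : mg (a • x) y = a * mg x y := by
  simp only [mg, Pi.smul_apply, smul_eq_mul]; ring

lemma mg_smul_right (a : ℝ) (x y : V4) : mg x (a • y) = a * mg x y := by
  simp only [mg, Pi.smul_apply, smul_eq_mul]; ring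

lemma mg_zero_left (y : V4) : mg 0 y = 0 := by simp [mg]

def mgB : LinearMap.BilinForm ℝ V4 :=
  LinearMap.mk₂ ℝ mg mg_add_left mg_smul_left mg_add_right mg_smul_right

lemma mg_e0_self : mg e0 e0 = 1 := by simp [mg, e0]

lemma mg_e0_right (t : V4) : mg t e0 = t 0 := by simp [mg, e0]

lemma sq_spatial_dot_le (a b : V4) : (a 1 * b 1 + a 2 * b 2 + a 3 * b 3) ^ 2 ≤
    (a 1 ^ 2 + a 2 ^ 2 + a 3 ^ 2) * (b 1 ^ 2 + b 2 ^ 2 + b 3 ^ 2) := by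
  nlinarith [sq_nonneg (a 1 * b 2 - a 2 * b 1), sq_nonneg (a 1 * b 3 - a 3 * b 1),
    sq_nonneg (a 2 * b 3 - a 3 * b 2)]

lemma time_pos_of_mg_pos {t s : V4} (ht : 0 < mg t t) (ht0 : 0 < t 0) (hs : 0 ≤ mg s s)
    (hst : 0 < mg s t) : 0 < s 0 := by
  have hcs := sq_spatial_dot_le s t
  by_contra! hs0
  unfold mg at *
  nlinarith [mul_nonneg (sq_nonneg (s 0)) ht.le,
    mul_nonneg hs (by positivity : (0:ℝ) ≤ t 1 ^ 2 + t 2 ^ 2 + t 3 ^ 2),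
    mul_nonpos_of_nonpos_of_nonneg hs0 ht0.le]

lemma eq_zero_of_orthogonal_timelike {t z : V4} (ht : 0 < mg t t) (hz : 0 ≤ mg z z)
    (hzt : mg z t = 0) : z = 0 := by
  have hcs := sq_spatial_dot_le z t
  unfold mg at *
  have hz0 : z 0 = 0 := by
    by_contra hz0
    have : 0 < z 0 ^ 2 := by positivity
    have hsq : (z 0 * t 0) ^ 2 = (z 1 * t 1 + z 2 * t 2 + z 3 * t 3) ^ 2 := by
      rw [show z 0 * t 0 = z 1 * t 1 + z 2 * t 2 + z 3 * t 3 by linarith]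
    nlinarith [mul_lt_mul_of_pos_left
        (by linarith : t 1 ^ 2 + t 2 ^ 2 + t 3 ^ 2 < t 0 ^ 2) this,
      mul_le_mul_of_nonneg_right (by linarith : z 1 ^ 2 + z 2 ^ 2 + z 3 ^ 2 ≤ z 0 ^ 2)
        (by positivity : (0:ℝ) ≤ t 1 ^ 2 + t 2 ^ 2 + t 3 ^ 2)]
  rw [hz0] at hz
  have h1 : z 1 = 0 := by nlinarith [sq_nonneg (z 1), sq_nonneg (z 2), sq_nonneg (z 3)]
  have h2 : z 2 = 0 := by nlinarith [sq_nonneg (z 1), sq_nonneg (z 2), sq_nonneg (z 3)]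
  have h3 : z 3 = 0 := by nlinarith [sq_nonneg (z 1), sq_nonneg (z 2), sq_nonneg (z 3)]
  ext i; fin_cases i <;> assumption

lemma eq_zero_of_forall_mg_eq_zero {z : V4} (h : ∀ y, mg z y = 0) : z = 0 :=
  eq_zero_of_orthogonal_timelike (t := e0) (by rw [mg_e0_self]; norm_num) (h z).ge (h e0)

lemma eq_zero_of_orthogonal_null_pair {u v z : V4} (hu : mg u u = 0) (hv : mg v v = 0)
    (huv : mg u v ≠ 0) (hz : 0 ≤ mg z z) (hzu : mg z u = 0) (hzv : mg z v = 0) : z = 0 := by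
  refine eq_zero_of_orthogonal_timelike (t := u + mg u v • v) ?_ hz ?_
  · simp only [mg_add_left, mg_add_right, mg_smul_left, mg_smul_right, hu, hv, mg_comm v u]
    nlinarith [sq_pos_of_ne_zero huv]
  · rw [mg_add_right, mg_smul_right, hzu, hzv]; ring

lemma eq_smul_of_orthogonal_null {u v z : V4} (hu : mg u u = 0) (hv : mg v v = 0)
    (huv : mg u v ≠ 0) (hz : mg z z = 0) (hzu : mg z u = 0) :
    z = (mg z v / mg u v) • u := by
  rw [← sub_eq_zero]
  refine eq_zero_of_orthogonal_null_pair hu hv huv (le_of_eq ?_) ?_ ?_ <;>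
    simp only [mg_sub_left, mg_sub_right, mg_smul_left, mg_smul_right, hu, hz, hzu, mg_comm u z,
      div_mul_cancel₀ _ huv] <;> ring

theorem LinearMap.det_eq_prod_of_apply_basis_eq_smul {R M ι : Type*} [CommRing R]
    [AddCommGroup M] [Module R M] [Fintype ι] [DecidableEq ι] (b : Module.Basis ι R M)
    (f : M →ₗ[R] M) (d : ι → R) (h : ∀ i, f (b i) = d i • b i) :
    LinearMap.det f = ∏ i, d i := by
  have hf : LinearMap.toMatrix b b f = Matrix.diagonal d := by
    ext i j
    rw [LinearMap.toMatrix_apply, h, map_smul, b.repr_self, Matrix.diagonal_apply]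
    rcases eq_or_ne i j with rfl | hij <;> simp [*]
  rw [← LinearMap.det_toMatrix b, hf, Matrix.det_diagonal]

lemma exists_ne_zero_orthogonal (u v w : V4) :
    ∃ e ≠ 0, mg e u = 0 ∧ mg e v = 0 ∧ mg e w = 0 := by
  let φ : V4 →ₗ[ℝ] Fin 3 → ℝ := LinearMap.pi ![mgB.flip u, mgB.flip v, mgB.flip w]
  obtain ⟨e, he, he0⟩ := (Submodule.ne_bot_iff _).mp
    (LinearMap.ker_ne_bot_of_finrank_lt (f := φ) (by simp))
  exact ⟨e, he0, congrFun he 0, congrFun he 1, congrFun he 2⟩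

lemma eq_zero_of_forall_mg_basis {ι : Type*} (b : Module.Basis ι ℝ V4) {z : V4}
    (h : ∀ i, mg z (b i) = 0) : z = 0 := by
  have hz : mgB z = 0 := b.ext fun i => h i
  exact eq_zero_of_forall_mg_eq_zero fun y => LinearMap.congr_fun hz y

lemma linearIndependent_null_triple_of_orthogonal {u v w e : V4} (hu : mg u u = 0)
    (hv : mg v v = 0) (hw : mg w w = 0) (huv : mg u v ≠ 0) (huw : mg u w ≠ 0)
    (hvw : mg v w ≠ 0) (he : mg e e ≠ 0) (heu : mg e u = 0) (hev : mg e v = 0)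
    (hew : mg e w = 0) :
    LinearIndependent ℝ ![u, v, w, e] := by
  rw [Fintype.linearIndependent_iff]
  intro c hc
  simp only [Fin.sum_univ_four, Matrix.cons_val] at hc
  have pair : ∀ y, c 0 * mg u y + c 1 * mg v y + c 2 * mg w y + c 3 * mg e y = 0 := fun y => by
    simpa only [mg_add_left, mg_smul_left, mg_zero_left] using congrArg (mg · y) hc
  have pu := pair u
  have pv := pair v
  have pw := pair w
  have pe := pair e
  rw [mg_comm v u, mg_comm w u, hu, heu] at pu
  rw [mg_comm w v, hv, hev] at pv
  rw [hw, hew] at pw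
  rw [mg_comm u e, mg_comm v e, mg_comm w e, heu, hev, hew] at pe
  have h3 : c 3 = 0 := by simpa [he] using pe
  have h2 : c 2 = 0 := by
    have : c 2 * (mg u w * mg v w) = 0 := by
      linear_combination (-mg u v * pw + mg u w * pv + mg v w * pu) / 2
    simpa [huw, hvw] using this
  have h0 : c 0 = 0 := by simpa [h2, huv] using pv
  have h1 : c 1 = 0 := by simpa [h2, huv] using pu
  intro i; fin_cases i <;> assumption

section Lorentz

variable {μ : V4 →ₗ[ℝ] V4}

theorem eq_id_of_fixes_null_triple (hmet : ∀ x y, mg (μ x) (μ y) = mg x y)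
    (hdet : LinearMap.det μ = 1) {u v w : V4} (hu : mg u u = 0) (hv : mg v v = 0)
    (hw : mg w w = 0) (huv : mg u v ≠ 0) (huw : mg u w ≠ 0) (hvw : mg v w ≠ 0)
    (hμu : μ u = u) (hμv : μ v = v) (hμw : μ w = w) : μ = LinearMap.id := by
  obtain ⟨e, he0, heu, hev, hew⟩ := exists_ne_zero_orthogonal u v w
  have he : mg e e ≠ 0 := fun h => he0 (eq_zero_of_orthogonal_null_pair hu hv huv h.ge heu hev)
  let b := basisOfLinearIndependentOfCardEqFinrank
    (linearIndependent_null_triple_of_orthogonal hu hv hw huv huw hvw he heu hev hew) (by simp)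
  have hb : ⇑b = ![u, v, w, e] := coe_basisOfLinearIndependentOfCardEqFinrank _ _
  obtain ⟨k, hμe⟩ : ∃ k : ℝ, μ e = k • e := by
    refine ⟨mg (μ e) e / mg e e, ?_⟩
    have orth : ∀ y, μ y = y → mg (μ e) y = mg e y := fun y hy => by
      simpa [hy] using hmet e y
    rw [← sub_eq_zero]
    refine eq_zero_of_forall_mg_basis b fun i => ?_
    fin_cases i <;> simp [hb, mg_sub_left, mg_smul_left, orth, hμu, hμv, hμw, heu, hev, hew, he]
  have hk : k = 1 := by
    have := LinearMap.det_eq_prod_of_apply_basis_eq_smul b μ ![1, 1, 1, k] fun i => by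
      fin_cases i <;> simp [hb, hμu, hμv, hμw, hμe]
    simpa [Fin.prod_univ_four, hdet] using this.symm
  refine b.ext fun i => ?_
  fin_cases i <;> simp [hb, hμu, hμv, hμw, hμe, hk]

lemma mul_eq_one_of_eigen (hmet : ∀ x y, mg (μ x) (μ y) = mg x y) {A B : V4} {α β : ℝ}
    (hA : μ A = α • A) (hB : μ B = β • B) (hAB : mg A B ≠ 0) : α * β = 1 := by
  have h := hmet A B
  rw [hA, hB, mg_smul_left, mg_smul_right, ← mul_assoc] at h
  exact mul_right_cancel₀ hAB (h.trans (one_mul _).symm)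

theorem eq_id_of_null_eigenvectors (hmet : ∀ x y, mg (μ x) (μ y) = mg x y)
    (hdet : LinearMap.det μ = 1) {u v w : V4} (hu : mg u u = 0) (hv : mg v v = 0)
    (hw : mg w w = 0) (huv : mg u v ≠ 0) (huw : mg u w ≠ 0) (hvw : mg v w ≠ 0) {p q r : ℝ}
    (hp : 0 < p) (hμu : μ u = p • u) (hμv : μ v = q • v) (hμw : μ w = r • w) :
    μ = LinearMap.id := by
  have hpq := mul_eq_one_of_eigen hmet hμu hμv huv
  have hpr := mul_eq_one_of_eigen hmet hμu hμw huw
  have hqr := mul_eq_one_of_eigen hmet hμv hμw hvw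
  have hpq' : p = q := by
    have hr : r ≠ 0 := right_ne_zero_of_mul_eq_one hpr
    exact mul_right_cancel₀ hr (hpr.trans hqr.symm)
  have hp1 : p = 1 := by
    subst hpq'
    nlinarith
  subst hp1
  obtain rfl : q = 1 := by simpa using hpq
  obtain rfl : r = 1 := by simpa using hpr
  exact eq_id_of_fixes_null_triple hmet hdet hu hv hw huv huw hvw
    (by simpa using hμu) (by simpa using hμv) (by simpa using hμw)

end Lorentz

lemma eq_smul_add_smul_of_forall_nonneg {u v w : V4} (hu : mg u u = 0) (hv : mg v v = 0)
    (huv : mg u v < 0) (hw : mg w w = 0)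
    (hpos : ∀ z, 0 ≤ mg z u → 0 ≤ mg z v → 0 ≤ mg z w) :
    ∃ a b : ℝ, 0 ≤ a ∧ 0 ≤ b ∧ a * b = 0 ∧ w = a • u + b • v := by
  set a := mg w v / mg u v
  set b := mg w u / mg u v
  set r := w - a • u - b • v
  have hru : mg r u = 0 := by
    simp only [r, b, mg_sub_left, mg_smul_left, hu, mg_comm v u, div_mul_cancel₀ _ huv.ne]; ring
  have hrv : mg r v = 0 := by
    simp only [r, a, mg_sub_left, mg_smul_left, hv, div_mul_cancel₀ _ huv.ne]; ring
  have hrw : mg r w = 0 := by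
    have h₁ := hpos r hru.ge hrv.ge
    have h₂ := hpos (-r) (by rw [mg_neg_left, hru, neg_zero]) (by rw [mg_neg_left, hrv, neg_zero])
    rw [mg_neg_left] at h₂
    linarith
  have hr : r = 0 := by
    refine eq_zero_of_orthogonal_null_pair hu hv huv.ne (le_of_eq ?_) hru hrv
    simp only [r, mg_sub_right, mg_smul_right, hru, hrv, hrw]; ring
  have hwab : w = a • u + b • v := by
    rw [← sub_eq_zero, ← hr]; simp only [r]; abel
  refine ⟨a, b, ?_, ?_, ?_, hwab⟩
  · have := hpos (-v) (by rw [mg_neg_left, mg_comm]; linarith) (by rw [mg_neg_left, hv, neg_zero])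
    rw [mg_neg_left, mg_comm] at this
    exact div_nonneg_of_nonpos (by linarith) huv.le
  · have := hpos (-u) (by rw [mg_neg_left, hu, neg_zero]) (by rw [mg_neg_left]; linarith)
    rw [mg_neg_left, mg_comm] at this
    exact div_nonneg_of_nonpos (by linarith) huv.le
  · rw [hwab] at hw
    simp only [mg_add_left, mg_add_right, mg_smul_left, mg_smul_right, hu, hv, mg_comm v u] at hw
    have : a * b * (2 * mg u v) = 0 := by linear_combination hw
    simpa [huv.ne] using this

lemma mem_wedge_iff {t x y : V4} : y ∈ Wedge t x ↔ 0 < mg y (x + t) ∧ 0 < mg y (x - t) := by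
  rw [Wedge, Set.mem_ofPred_eq, abs_lt, mg_add_right, mg_sub_right]
  constructor <;> rintro ⟨h₁, h₂⟩ <;> constructor <;> linarith

lemma neg_image_wedge (t x : V4) : (fun y : V4 => -y) '' Wedge t x = Wedge t (-x) := by
  ext y
  simp only [Set.image_neg_eq_neg, Set.mem_neg, Wedge, Set.mem_ofPred_eq, mg_neg_left,
    mg_neg_right, abs_neg]

lemma image_wedge_subset {μ : V4 →ₗ[ℝ] V4} (hmet : ∀ x y, mg (μ x) (μ y) = mg x y)
    (t x : V4) :
    ⇑μ '' Wedge t x ⊆ Wedge (μ t) (μ x) := by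
  rintro _ ⟨y, hy, rfl⟩
  simpa only [Wedge, Set.mem_ofPred_eq, hmet] using hy

lemma wedge_eq_of_rays {t x t' x' : V4} {a c : ℝ} (ha : 0 < a) (hc : 0 < c)
    (hu : x' + t' = a • (x + t)) (hv : x' - t' = c • (x - t)) : Wedge t' x' = Wedge t x := by
  ext y
  rw [mem_wedge_iff, mem_wedge_iff, hu, hv, mg_smul_right, mg_smul_right,
    mul_pos_iff_of_pos_left ha, mul_pos_iff_of_pos_left hc]

namespace IsZweibein

variable {t x t' x' : V4}

lemma mg_add_self (h : IsZweibein t x) : mg (x + t) (x + t) = 0 := by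
  obtain ⟨htt, hxx, htx, -⟩ := h
  simp only [mg_add_left, mg_add_right, htt, hxx, htx, mg_comm x t]; ring

lemma mg_sub_self (h : IsZweibein t x) : mg (x - t) (x - t) = 0 := by
  obtain ⟨htt, hxx, htx, -⟩ := h
  simp only [mg_sub_left, mg_sub_right, htt, hxx, htx, mg_comm x t]; ring

lemma mg_add_sub (h : IsZweibein t x) : mg (x + t) (x - t) = -2 := by
  obtain ⟨htt, hxx, htx, -⟩ := h
  simp only [mg_add_left, mg_sub_right, htt, hxx, htx, mg_comm x t]; ring

lemma time_add_pos (h : IsZweibein t x) : 0 < (x + t) 0 := by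
  have hnull := h.mg_add_self
  obtain ⟨htt, -, htx, ht0⟩ := h
  refine time_pos_of_mg_pos (t := t) (by rw [htt]; norm_num) ht0 hnull.ge ?_
  rw [mg_add_left, mg_comm, htx, htt]; norm_num

lemma time_sub_neg (h : IsZweibein t x) : (x - t) 0 < 0 := by
  have hnull := h.mg_sub_self
  obtain ⟨htt, -, htx, ht0⟩ := h
  have : 0 < (-(x - t)) 0 := by
    refine time_pos_of_mg_pos (t := t) (by rw [htt]; norm_num) ht0
      (by rw [mg_neg_left, mg_neg_right, hnull, neg_zero, neg_zero]) ?_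
    rw [mg_neg_left, mg_sub_left, mg_comm, htx, htt]; norm_num
  simpa using this

lemma neg_right (h : IsZweibein t x) : IsZweibein t (-x) := by
  obtain ⟨htt, hxx, htx, ht0⟩ := h
  exact ⟨htt, by rw [mg_neg_left, mg_neg_right, hxx, neg_neg],
    by rw [mg_neg_right, htx, neg_zero], ht0⟩

lemma map {μ : V4 →ₗ[ℝ] V4} (hμ : IsRestrictedLorentz μ) (h : IsZweibein t x) :
    IsZweibein (μ t) (μ x) := by
  obtain ⟨hmet, -, he0⟩ := hμ
  obtain ⟨htt, hxx, htx, ht0⟩ := h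
  refine ⟨by rw [hmet, htt], by rw [hmet, hxx], by rw [hmet, htx], ?_⟩
  refine time_pos_of_mg_pos (t := μ e0) (by rw [hmet, mg_e0_self]; norm_num) he0
    (by rw [hmet, htt]; norm_num) ?_
  rwa [hmet, mg_e0_right]

lemma mg_neg_add (h : IsZweibein t x) : mg (-x) (x + t) = 1 := by
  obtain ⟨-, hxx, htx, -⟩ := h
  rw [mg_neg_left, mg_add_right, hxx, mg_comm x t, htx]; norm_num

lemma mg_neg_sub (h : IsZweibein t x) : mg (-x) (x - t) = 1 := by
  obtain ⟨-, hxx, htx, -⟩ := h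
  rw [mg_neg_left, mg_sub_right, hxx, mg_comm x t, htx]; norm_num

lemma neg_mem_wedge (h : IsZweibein t x) : -x ∈ Wedge t x := by
  rw [mem_wedge_iff, h.mg_neg_add, h.mg_neg_sub]
  norm_num

lemma mg_nonneg_of_wedge_subset (h : IsZweibein t x) {n : V4}
    (hn : Wedge t x ⊆ {y | 0 < mg y n}) {z : V4} (hzu : 0 ≤ mg z (x + t))
    (hzv : 0 ≤ mg z (x - t)) : 0 ≤ mg z n := by
  have hc : 0 < mg (-x) n := hn h.neg_mem_wedge
  refine neg_nonpos.mp (le_of_forall_pos_lt_add fun ε hε => ?_)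
  have hmem : z + (ε / mg (-x) n) • (-x) ∈ Wedge t x := by
    rw [mem_wedge_iff, mg_add_left, mg_add_left, mg_smul_left, mg_smul_left, h.mg_neg_add,
      h.mg_neg_sub]
    constructor <;> positivity
  have := hn hmem
  rw [Set.mem_ofPred_eq, mg_add_left, mg_smul_left, div_mul_cancel₀ _ hc.ne'] at this
  linarith

lemma rays_of_wedge_subset (h : IsZweibein t x) (h' : IsZweibein t' x')
    (hW : Wedge t x ⊆ Wedge t' x') :
    (∃ a : ℝ, 0 < a ∧ x' + t' = a • (x + t)) ∧
      ∃ c : ℝ, 0 < c ∧ x' - t' = c • (x - t) := by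
  have dual : ∀ n, Wedge t' x' ⊆ {y | 0 < mg y n} → mg n n = 0 →
      ∃ a b : ℝ, 0 ≤ a ∧ 0 ≤ b ∧ a * b = 0 ∧ n = a • (x + t) + b • (x - t) :=
    fun n hn hnn => eq_smul_add_smul_of_forall_nonneg h.mg_add_self h.mg_sub_self
      (by rw [h.mg_add_sub]; norm_num) hnn
      fun z hzu hzv => h.mg_nonneg_of_wedge_subset (hW.trans hn) hzu hzv
  obtain ⟨a, b, ha, hb, hab, hu⟩ :=
    dual (x' + t') (fun y hy => (mem_wedge_iff.mp hy).1) h'.mg_add_self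
  obtain ⟨c, d, hc, hd, hcd, hv⟩ :=
    dual (x' - t') (fun y hy => (mem_wedge_iff.mp hy).2) h'.mg_sub_self
  have hU := h.time_add_pos
  have hV := h.time_sub_neg
  have hu0 := h'.time_add_pos
  have hv0 := h'.time_sub_neg
  rw [hu] at hu0
  rw [hv] at hv0
  simp only [Pi.add_apply, Pi.sub_apply, Pi.smul_apply, smul_eq_mul] at hu0 hv0 hU hV
  obtain rfl : b = 0 := by
    rcases mul_eq_zero.mp hab with rfl | rfl
    · nlinarith
    · rfl
  obtain rfl : c = 0 := by
    rcases mul_eq_zero.mp hcd with rfl | rfl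
    · rfl
    · nlinarith
  exact ⟨⟨a, by nlinarith, by simpa using hu⟩, ⟨d, by nlinarith, by simpa using hv⟩⟩

lemma wedge_eq_of_orthogonal (h : IsZweibein t x) (h' : IsZweibein t' x')
    (hu : mg (x + t) (x' + t') = 0) (hv : mg (x - t) (x' - t') = 0) :
    Wedge t' x' = Wedge t x := by
  have huv : mg (x + t) (x - t) ≠ 0 := by rw [h.mg_add_sub]; norm_num
  have hu' := eq_smul_of_orthogonal_null h.mg_add_self h.mg_sub_self huv h'.mg_add_self
    (by rw [mg_comm, hu])
  have hv' := eq_smul_of_orthogonal_null h.mg_sub_self h.mg_add_self (by rwa [mg_comm])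
    h'.mg_sub_self (by rw [mg_comm, hv])
  have hu0 := h'.time_add_pos
  have hv0 := h'.time_sub_neg
  rw [hu'] at hu0
  rw [hv'] at hv0
  simp only [Pi.smul_apply, smul_eq_mul] at hu0 hv0
  have hU := h.time_add_pos
  have hV := h.time_sub_neg
  exact wedge_eq_of_rays (by nlinarith) (by nlinarith) hu' hv'

lemma wedge_eq_or_transverse {ta xa tb xb : V4} (ha : IsZweibein ta xa)
    (hb : IsZweibein tb xb) :
    Wedge ta xa = Wedge tb xb ∨ Wedge ta xa = (fun y : V4 => -y) '' Wedge tb xb ∨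
      (mg (xa + ta) (xb + tb) ≠ 0 ∧ mg (xa - ta) (xb + tb) ≠ 0) ∨
      (mg (xa + ta) (xb - tb) ≠ 0 ∧ mg (xa - ta) (xb - tb) ≠ 0) := by
  have not_orth : ∀ n ≠ 0, mg n n = 0 → mg n (xb + tb) = 0 → mg n (xb - tb) = 0 → False :=
    fun n hn hnn hnu hnv => hn <| eq_zero_of_orthogonal_null_pair hb.mg_add_self hb.mg_sub_self
      (by rw [hb.mg_add_sub]; norm_num) hnn.ge hnu hnv
  have hua : xa + ta ≠ 0 := fun h0 => (h0 ▸ ha.time_add_pos).ne rfl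
  have hva : xa - ta ≠ 0 := fun h0 => (h0 ▸ ha.time_sub_neg).ne rfl
  by_contra! ⟨hne, hne', hU, hV⟩
  rcases eq_or_ne (mg (xa + ta) (xb + tb)) 0 with h₁ | h₁ <;>
    rcases eq_or_ne (mg (xa + ta) (xb - tb)) 0 with h₂ | h₂
  · exact not_orth _ hua ha.mg_add_self h₁ h₂
  · exact hne (ha.wedge_eq_of_orthogonal hb h₁ (hV h₂)).symm
  · refine hne' ?_
    rw [neg_image_wedge]
    refine (ha.wedge_eq_of_orthogonal hb.neg_right ?_ ?_).symm
    · rw [show -xb + tb = -(xb - tb) by abel, mg_neg_right, h₂, neg_zero]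
    · rw [show -xb - tb = -(xb + tb) by abel, mg_neg_right, hU h₁, neg_zero]
  · exact not_orth _ hva ha.mg_sub_self (hU h₁) (hV h₂)

lemma exists_eigen_of_image_wedge_eq (h : IsZweibein t x) {μ : V4 →ₗ[ℝ] V4}
    (hμ : IsRestrictedLorentz μ) (hW : ⇑μ '' Wedge t x = Wedge t x) :
    (∃ p : ℝ, 0 < p ∧ μ (x + t) = p • (x + t)) ∧
      ∃ q : ℝ, 0 < q ∧ μ (x - t) = q • (x - t) := by
  simpa only [map_add, map_sub] using
    h.rays_of_wedge_subset (h.map hμ) (hW.symm.subset.trans (image_wedge_subset hμ.1 t x))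

end IsZweibein

/-- If two Rindler wedges `W_a`, `W_b` satisfy `W_a ∉ {W_b, -W_b}`, then the only
restricted Lorentz transformation mapping both `W_a` onto `W_a` and `W_b` onto
`W_b` is the identity. -/
theorem trivial_joint_wedge_stabilizer
    (ta xa tb xb : V4) (ha : IsZweibein ta xa) (hb : IsZweibein tb xb)
    (hne : Wedge ta xa ≠ Wedge tb xb)
    (hne' : Wedge ta xa ≠ (fun y : V4 => -y) '' Wedge tb xb)
    (μ : V4 →ₗ[ℝ] V4) (hμ : IsRestrictedLorentz μ)
    (hWa : ⇑μ '' Wedge ta xa = Wedge ta xa)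
    (hWb : ⇑μ '' Wedge tb xb = Wedge tb xb) :
    μ = LinearMap.id := by
  obtain ⟨⟨p, hp, hμua⟩, ⟨q, -, hμva⟩⟩ := ha.exists_eigen_of_image_wedge_eq hμ hWa
  obtain ⟨⟨r, -, hμub⟩, ⟨s, -, hμvb⟩⟩ := hb.exists_eigen_of_image_wedge_eq hμ hWb
  have huv : mg (xa + ta) (xa - ta) ≠ 0 := by rw [ha.mg_add_sub]; norm_num
  rcases ha.wedge_eq_or_transverse hb with h | h | ⟨huw, hvw⟩ | ⟨huw, hvw⟩
  · exact absurd h hne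
  · exact absurd h hne'
  · exact eq_id_of_null_eigenvectors hμ.1 hμ.2.1 ha.mg_add_self ha.mg_sub_self hb.mg_add_self
      huv huw hvw hp hμua hμva hμub
  · exact eq_id_of_null_eigenvectors hμ.1 hμ.2.1 ha.mg_add_self ha.mg_sub_self hb.mg_sub_self
      huv huw hvw hp hμua hμva hμvb
end
end
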